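/- Let N ≥ 5, p > N/(N−4), and let ω satisfy 4p/(p−1) ≤ ω < N. Then there exist a constant C > 0, a continuous function f on D^c with 0 < f(x) ≤ C|x|^{−ω} for all |x| ≥ 1, and a strictly positive smooth function v on D^c such that Δ²v(x) = v(x)^p + f(x) for all |x| > 1. Explicitly, one may take v(x) = ξ|x|^{−m} for any m with ω − 4 < m < N − 4 (this interval is nonempty and any such m also satisfies m > 4/(p−1)) and ξ > 0 sufficiently small, with f := Δ²v − v^p. -/

import Mathlib

open MeasureTheory Real Set Topology

noncomputable section

/-- `ℝ^N` -/
abbrev E (N : ℕ) : Type := EuclideanSpace ℝ (Fin N)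

/-- The Laplacian: sum of second partial derivatives. -/
def lapl {N : ℕ} (f : E N → ℝ) (x : E N) : ℝ :=
  ∑ i : Fin N,
    fderiv ℝ (fun y => fderiv ℝ f y (EuclideanSpace.single i 1)) x (EuclideanSpace.single i 1)

/-- The biharmonic operator `Δ² = Δ ∘ Δ`. -/
def bilapl {N : ℕ} (f : E N → ℝ) : E N → ℝ := lapl (lapl f)

/-!
On radial powers the Laplacian acts by `Δ |x|^a = a (a + N - 2) |x|^(a-2)`, so
`Δ² (ξ |x|^(-m)) = ξ K |x|^(-m-4)` with `K = m (N - 2 - m) (m + 2) (N - 4 - m) > 0` for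
`0 < m < N - 4`. Since `m > 4/(p-1)` means `m p > m + 4`, on `|x| ≥ 1` we get
`v^p = ξ^p |x|^(-m p) ≤ ξ^p |x|^(-m-4)`, so `f = Δ²v - v^p` is positive as soon as `ξ^(p-1) < K`,
and `f ≤ ξ K |x|^(-m-4) ≤ ξ K |x|^(-ω)` because `ω ≤ m + 4`.
-/

section NormRpow

variable {F : Type*} [NormedAddCommGroup F] [InnerProductSpace ℝ F]

theorem hasFDerivAt_norm_rpow_of_ne_zero (a : ℝ) {x : F} (hx : x ≠ 0) :
    HasFDerivAt (fun y : F ↦ ‖y‖ ^ a) ((a * ‖x‖ ^ (a - 2)) • innerSL ℝ x) x := by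
  convert ((hasStrictFDerivAt_norm_sq x).rpow_const (p := a / 2) (by simp [hx])).hasFDerivAt
    using 1
  · ext y
    rw [← Real.rpow_natCast_mul (norm_nonneg y)]
    ring_nf
  · rw [← Real.rpow_natCast_mul (norm_nonneg x), ← Nat.cast_smul_eq_nsmul ℝ, smul_smul]
    ring_nf

theorem contDiffOn_norm_rpow (n : WithTop ℕ∞) (a : ℝ) :
    ContDiffOn ℝ n (fun y : F ↦ ‖y‖ ^ a) {x | x ≠ 0} := fun _ hx ↦
  ((contDiffAt_norm ℝ hx).rpow_const_of_ne (norm_ne_zero_iff.mpr hx)).contDiffWithinAt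

end NormRpow

def radialBilaplCoeff (N a : ℝ) : ℝ := a * (a + N - 2) * ((a - 2) * (a - 2 + N - 2))

theorem radialBilaplCoeff_neg_pos {N m : ℝ} (hm₀ : 0 < m) (hmN : m < N - 4) :
    0 < radialBilaplCoeff N (-m) := by
  have h₁ : 0 < N - 2 - m := by linarith
  have h₂ : 0 < N - 4 - m := by linarith
  have : radialBilaplCoeff N (-m) = m * (N - 2 - m) * ((m + 2) * (N - 4 - m)) := by
    rw [radialBilaplCoeff]; ring
  rw [this]
  positivity

section Laplacian

variable {N : ℕ}

theorem lapl_congr_of_eventuallyEq {f g : E N → ℝ} {x : E N} (h : f =ᶠ[𝓝 x] g) :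
    lapl f x = lapl g x := by
  refine Finset.sum_congr rfl fun i _ ↦ ?_
  have hderiv : (fun y ↦ fderiv ℝ f y (EuclideanSpace.single i 1))
      =ᶠ[𝓝 x] (fun y ↦ fderiv ℝ g y (EuclideanSpace.single i 1)) := by
    filter_upwards [h.fderiv (𝕜 := ℝ)] with y hy
    rw [hy]
  rw [hderiv.fderiv_eq]

theorem fderiv_const_mul_norm_rpow_single (c a : ℝ) {x : E N} (hx : x ≠ 0) (j : Fin N) :
    fderiv ℝ (fun y : E N ↦ c * ‖y‖ ^ a) x (EuclideanSpace.single j 1)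
      = c * a * ‖x‖ ^ (a - 2) * x j := by
  rw [((hasFDerivAt_norm_rpow_of_ne_zero a hx).const_mul c).fderiv]
  simp [EuclideanSpace.inner_single_right]
  ring

theorem lapl_const_mul_norm_rpow (c a : ℝ) {x : E N} (hx : x ≠ 0) :
    lapl (fun y : E N ↦ c * ‖y‖ ^ a) x = c * (a * (a + N - 2)) * ‖x‖ ^ (a - 2) := by
  have hpartial : ∀ i : Fin N,
      fderiv ℝ (fun y ↦ fderiv ℝ (fun z : E N ↦ c * ‖z‖ ^ a) y (EuclideanSpace.single i 1)) x
        (EuclideanSpace.single i 1)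
      = c * a * ‖x‖ ^ (a - 2) + c * a * (a - 2) * ‖x‖ ^ (a - 4) * x i ^ 2 := by
    intro i
    have hfirst : (fun y ↦ fderiv ℝ (fun z : E N ↦ c * ‖z‖ ^ a) y (EuclideanSpace.single i 1))
        =ᶠ[𝓝 x] fun y : E N ↦ c * a * ‖y‖ ^ (a - 2) * y i := by
      filter_upwards [isOpen_compl_singleton.mem_nhds hx] with y hy
      exact fderiv_const_mul_norm_rpow_single c a hy i
    have hsecond : HasFDerivAt (fun y : E N ↦ c * a * ‖y‖ ^ (a - 2) * y i) _ x :=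
      ((hasFDerivAt_norm_rpow_of_ne_zero (a - 2) hx).const_mul (c * a)).mul
        (EuclideanSpace.proj i : E N →L[ℝ] ℝ).hasFDerivAt
    rw [hfirst.fderiv_eq, hsecond.fderiv]
    simp [EuclideanSpace.inner_single_right, show a - 2 - 2 = a - 4 by ring]
    ring
  have hnorm : ‖x‖ ^ (a - 4) * ∑ i, x i ^ 2 = ‖x‖ ^ (a - 2) := by
    rw [← EuclideanSpace.real_norm_sq_eq, ← Real.rpow_natCast,
      ← Real.rpow_add (norm_pos_iff.mpr hx)]
    ring_nf
  simp only [lapl, hpartial, Finset.sum_add_distrib, Finset.sum_const, Finset.card_univ,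
    Fintype.card_fin, nsmul_eq_mul, ← Finset.mul_sum, mul_assoc (c * a * (a - 2)), hnorm]
  ring

theorem bilapl_const_mul_norm_rpow (c a : ℝ) {x : E N} (hx : x ≠ 0) :
    bilapl (fun y : E N ↦ c * ‖y‖ ^ a) x = c * radialBilaplCoeff N a * ‖x‖ ^ (a - 4) := by
  have hlapl : lapl (fun y : E N ↦ c * ‖y‖ ^ a)
      =ᶠ[𝓝 x] fun y ↦ c * (a * (a + N - 2)) * ‖y‖ ^ (a - 2) := by
    filter_upwards [isOpen_compl_singleton.mem_nhds hx] with y hy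
    exact lapl_const_mul_norm_rpow c a hy
  rw [bilapl, lapl_congr_of_eventuallyEq hlapl, lapl_const_mul_norm_rpow _ _ hx, radialBilaplCoeff,
    show a - 2 - 2 = a - 4 by ring]
  ring

end Laplacian

theorem exists_pos_forall_rpow_lt_mul {K p : ℝ} (hK : 0 < K) (hp : 1 < p) :
    ∃ ξ₀ > 0, ∀ ξ : ℝ, 0 < ξ → ξ ≤ ξ₀ → ξ ^ p < ξ * K := by
  have hp₁ : 0 < p - 1 := by linarith
  refine ⟨(K / 2) ^ (p - 1)⁻¹, by positivity, fun ξ hξ hξξ₀ ↦ ?_⟩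
  have hsmall : ξ ^ (p - 1) ≤ K / 2 := by
    calc ξ ^ (p - 1) ≤ ((K / 2) ^ (p - 1)⁻¹) ^ (p - 1) := by gcongr
      _ = K / 2 := Real.rpow_inv_rpow (by positivity) hp₁.ne'
  calc ξ ^ p = ξ * ξ ^ (p - 1) := by
        rw [← Real.rpow_one_add' hξ.le (by linarith)]; ring_nf
    _ < ξ * K := by gcongr; linarith

theorem rpow_mul_rpow_neg_lt {ξ K m p r : ℝ} (hξ : 0 < ξ) (hξK : ξ ^ p < ξ * K)
    (hmp : m + 4 ≤ m * p) (hr : 1 ≤ r) :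
    (ξ * r ^ (-m)) ^ p < ξ * K * r ^ (-m - 4) := by
  have hr₀ : 0 < r := by linarith
  calc (ξ * r ^ (-m)) ^ p = ξ ^ p * r ^ (-(m * p)) := by
        rw [Real.mul_rpow hξ.le (by positivity), ← Real.rpow_mul hr₀.le, neg_mul]
    _ ≤ ξ ^ p * r ^ (-m - 4) := by
        gcongr
        linarith
    _ < ξ * K * r ^ (-m - 4) := by gcongr

/-- second critical exponent (Lee–Ni), existence part. For `N ≥ 5`,
`p > N/(N−4)` and `4p/(p−1) ≤ ω < N`, the interval `(ω−4, N−4)` is nonempty, every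
`m` in it satisfies `m > 4/(p−1)`, and for every such `m` and every sufficiently
small `ξ > 0`, the strictly positive smooth function `v(x) = ξ|x|^{−m}` solves
`Δ²v = v^p + f` on `{|x| > 1}` with forcing term `f := Δ²v − v^p` continuous and
satisfying `0 < f(x) ≤ C|x|^{−ω}` for all `|x| ≥ 1`. -/
theorem second_critical_existence
    (N : ℕ) (hN : 5 ≤ N) (p : ℝ) (hp : (N : ℝ) / ((N : ℝ) - 4) < p)
    (ω : ℝ) (hω₁ : 4 * p / (p - 1) ≤ ω) (hω₂ : ω < N) :
    (ω - 4 < (N : ℝ) - 4) ∧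
    (∀ m : ℝ, ω - 4 < m → m < (N : ℝ) - 4 → 4 / (p - 1) < m) ∧
    ∀ m : ℝ, ω - 4 < m → m < (N : ℝ) - 4 →
      ∃ ξ₀ > (0 : ℝ), ∀ ξ : ℝ, 0 < ξ → ξ ≤ ξ₀ →
        ∃ C > (0 : ℝ), ∃ f : E N → ℝ,
          ContinuousOn f {x : E N | 1 ≤ ‖x‖} ∧
          (∀ x : E N, 1 ≤ ‖x‖ → 0 < f x ∧ f x ≤ C * ‖x‖ ^ (-ω)) ∧
          ContDiffOn ℝ (⊤ : ℕ∞) (fun y : E N => ξ * ‖y‖ ^ (-m)) {x : E N | 1 ≤ ‖x‖} ∧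
          (∀ x : E N, 1 ≤ ‖x‖ → 0 < ξ * ‖x‖ ^ (-m)) ∧
          (∀ x : E N, 1 < ‖x‖ →
            bilapl (fun y => ξ * ‖y‖ ^ (-m)) x = (ξ * ‖x‖ ^ (-m)) ^ p + f x) := by
  have hN₅ : (5 : ℝ) ≤ N := by exact_mod_cast hN
  have hp₁ : 1 < p := lt_trans ((one_lt_div (by linarith)).mpr (by linarith)) hp
  have hω₄ : 4 / (p - 1) ≤ ω - 4 := by
    rw [div_le_iff₀ (by linarith)] at hω₁ ⊢
    nlinarith
  refine ⟨by linarith, fun m hm _ ↦ by linarith, fun m hm₁ hm₂ ↦ ?_⟩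
  have hm₀ : 0 < m := (div_pos four_pos (by linarith)).trans_le hω₄ |>.trans hm₁
  have hmp : m + 4 ≤ m * p := by
    nlinarith [(div_le_iff₀ (by linarith : 0 < p - 1)).mp (hω₄.trans hm₁.le)]
  set K := radialBilaplCoeff N (-m)
  have hK : 0 < K := radialBilaplCoeff_neg_pos hm₀ (by linarith)
  obtain ⟨ξ₀, hξ₀, hsmall⟩ := exists_pos_forall_rpow_lt_mul hK hp₁
  refine ⟨ξ₀, hξ₀, fun ξ hξ hξξ₀ ↦ ⟨ξ * K, mul_pos hξ hK,
    fun x ↦ ξ * K * ‖x‖ ^ (-m - 4) - (ξ * ‖x‖ ^ (-m)) ^ p, ?_, fun x hx ↦ ⟨?_, ?_⟩, ?_,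
    fun x hx ↦ by positivity, fun x hx ↦ ?_⟩⟩
  · refine fun x hx ↦ ContinuousAt.continuousWithinAt ?_
    have hx₀ : ‖x‖ ≠ 0 := (one_pos.trans_le hx).ne'
    fun_prop (disch := first | exact Or.inl hx₀ | exact Or.inr (by linarith))
  · exact sub_pos.mpr (rpow_mul_rpow_neg_lt hξ (hsmall ξ hξ hξξ₀) hmp hx)
  · have hdecay : ‖x‖ ^ (-m - 4) ≤ ‖x‖ ^ (-ω) :=
      Real.rpow_le_rpow_of_exponent_le hx (by linarith)
    have hvp : 0 ≤ (ξ * ‖x‖ ^ (-m)) ^ p := by positivity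
    nlinarith [mul_pos hξ hK]
  · exact (contDiffOn_const.mul (contDiffOn_norm_rpow _ _)).mono
      fun x hx ↦ norm_pos_iff.mp (one_pos.trans_le hx)
  · rw [bilapl_const_mul_norm_rpow ξ (-m) (norm_pos_iff.mp (one_pos.trans hx))]
    ring
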